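/- arXiv:1306.2060 — 2 statements merged into one kernel-verified Lean document; each statement's English description precedes it below -/
import Mathlib

section
/- In the currency with denominations {25, 18, 5, 1}, the sum over n from 0 to 99 of the minimum number of parts in a partition of n into these denominations equals 389. -/
/-- `s` is a partition of `n` into parts from the set `D`. -/
def IsPartition (D : Set ℕ) (n : ℕ) (s : Multiset ℕ) : Prop :=
  (∀ x ∈ s, x ∈ D) ∧ s.sum = n

/-- The minimum number of parts in a partition of `n` into parts from {25, 18, 5, 1}. -/
noncomputable def mShallit (n : ℕ) : ℕ :=
  sInf {k | ∃ s : Multiset ℕ, IsPartition {25, 18, 5, 1} n s ∧ s.card = k}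

/-! A table `g` of the claimed values `m(0), …, m(99)` is certified by the Bellman equations
of the coin problem: `g 0 = 0`, `g n ≤ g (n - c) + 1` for every coin `c ≤ n`, and equality is
attained by some coin when `n > 0`. The inequalities bound every partition from below by
induction on its parts, the attained equalities build a partition with `g n` parts, and the
theorem is then the sum of the table. -/

section Bellman

variable {D : Set ℕ} {g : ℕ → ℕ} {N : ℕ}

lemma IsPartition.cons {n c : ℕ} {s : Multiset ℕ} (hs : IsPartition D n s) (hc : c ∈ D) :
    IsPartition D (c + n) (c ::ₘ s) :=
  ⟨fun x hx => (Multiset.mem_cons.mp hx).elim (· ▸ hc) (hs.1 x), by simp [hs.2]⟩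

lemma le_card_of_isPartition (h0 : g 0 = 0)
    (hle : ∀ n < N, ∀ c ∈ D, c ≤ n → g n ≤ g (n - c) + 1)
    {n : ℕ} (hn : n < N) {s : Multiset ℕ} (hs : IsPartition D n s) : g n ≤ s.card := by
  obtain ⟨hsD, rfl⟩ := hs
  induction s using Multiset.induction_on with
  | empty => simp [h0]
  | cons c t ih =>
    have hc : c ∈ D := hsD c (Multiset.mem_cons_self c t)
    have ht : g t.sum ≤ t.card :=
      ih (fun x hx => hsD x (Multiset.mem_cons_of_mem hx)) (by simp at hn; omega)
    have hstep := hle _ hn c hc (by simp)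
    simp only [Multiset.sum_cons, Multiset.card_cons, add_tsub_cancel_left] at hstep ⊢
    omega

lemma exists_isPartition_card_eq (h0 : g 0 = 0)
    (heq : ∀ n < N, 0 < n → ∃ c ∈ D, c ≤ n ∧ g n = g (n - c) + 1) :
    ∀ n < N, ∃ s, IsPartition D n s ∧ s.card = g n := by
  intro n
  induction n using Nat.strong_induction_on with
  | _ n ih =>
    intro hn
    rcases Nat.eq_zero_or_pos n with rfl | hpos
    · exact ⟨0, ⟨by simp, rfl⟩, h0.symm⟩
    · obtain ⟨c, hc, hcn, hgc⟩ := heq n hn hpos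
      -- `g n = g (n - c) + 1` rules out `c = 0`, so `n - c < n`.
      have hlt : n - c < n := by
        rcases Nat.eq_zero_or_pos c with rfl | hc0
        · simp at hgc
        · omega
      obtain ⟨s, hs, hcard⟩ := ih (n - c) hlt (by omega)
      refine ⟨c ::ₘ s, ?_, by simp [hcard, hgc]⟩
      simpa [Nat.add_sub_cancel' hcn] using hs.cons hc

lemma sInf_card_isPartition_eq (h0 : g 0 = 0)
    (hle : ∀ n < N, ∀ c ∈ D, c ≤ n → g n ≤ g (n - c) + 1)
    (heq : ∀ n < N, 0 < n → ∃ c ∈ D, c ≤ n ∧ g n = g (n - c) + 1)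
    {n : ℕ} (hn : n < N) :
    sInf {k | ∃ s : Multiset ℕ, IsPartition D n s ∧ s.card = k} = g n := by
  obtain ⟨s, hs, hcard⟩ := exists_isPartition_card_eq h0 heq n hn
  refine le_antisymm (Nat.sInf_le ⟨s, hs, hcard⟩) ?_
  have hne : {k | ∃ s : Multiset ℕ, IsPartition D n s ∧ s.card = k}.Nonempty :=
    ⟨_, s, hs, hcard⟩
  obtain ⟨t, ht, htcard⟩ := Nat.sInf_mem hne
  exact htcard ▸ le_card_of_isPartition h0 hle hn ht

end Bellman

def shallitTable : List ℕ :=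
  [0, 1, 2, 3, 4, 1, 2, 3, 4, 5, 2, 3, 4, 5, 6, 3, 4, 5, 1, 2, 3, 4, 5, 2, 3,
   1, 2, 3, 3, 4, 2, 3, 4, 4, 5, 3, 2, 3, 4, 5, 4, 3, 4, 2, 3, 4, 4, 5, 3, 4,
   2, 3, 4, 4, 3, 3, 4, 5, 5, 4, 4, 3, 4, 5, 5, 5, 4, 5, 3, 4, 5, 5, 4, 4, 5,
   3, 4, 5, 5, 4, 4, 5, 6, 6, 5, 5, 4, 5, 6, 6, 5, 5, 6, 4, 5, 6, 6, 5, 5, 6]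

def shallitValue (n : ℕ) : ℕ := shallitTable.getD n 0

lemma shallitValue_le :
    ∀ n < 100, ∀ c ∈ [25, 18, 5, 1], c ≤ n → shallitValue n ≤ shallitValue (n - c) + 1 := by
  decide

lemma shallitValue_eq :
    ∀ n < 100, 0 < n → ∃ c ∈ [25, 18, 5, 1], c ≤ n ∧
      shallitValue n = shallitValue (n - c) + 1 := by
  decide

lemma mShallit_eq_shallitValue {n : ℕ} (hn : n < 100) : mShallit n = shallitValue n := by
  refine sInf_card_isPartition_eq rfl (fun n hn c hc => shallitValue_le n hn c ?_)
    (fun n hn hpos => ?_) hn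
  · simpa using hc
  · obtain ⟨c, hc, h⟩ := shallitValue_eq n hn hpos
    exact ⟨c, by simpa using hc, h⟩

set_option maxRecDepth 4000 in
/-- The sum over 0 ≤ n ≤ 99 of the minimum number of coins in the Shallit currency
is 389. -/
theorem sum_min_coins_shallit :
    (∑ n ∈ Finset.range 100, mShallit n) = 389 := by
  rw [Finset.sum_congr rfl fun n hn => mShallit_eq_shallitValue (Finset.mem_range.mp hn)]
  rfl
end

section
/- If a finite-state Markov chain on wallet states has stationary distribution p such that the induced distribution of the wallet's total value is uniform on {0, 1, ..., 99}, then the expected number of coins under p is at least 47/10. -/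
/-! Adding one coin of value 25, 10, 5 or 1 raises the greedy coin count by at most one, so
every wallet holds at least the greedy count of its value. Under the uniform distribution of
values the greedy count averages to 470 / 100 over `0, …, 99`. -/

open Finset

def greedyCount (n : ℕ) : ℕ :=
  n / 25 + n % 25 / 10 + n % 25 % 10 / 5 + n % 25 % 10 % 5

lemma greedyCount_add_mul_25 (m q : ℕ) : greedyCount (m + 25 * q) = greedyCount m + q := by
  unfold greedyCount
  omega

lemma greedyCount_add_coin_le {c : ℕ} (hc : c ∈ ({25, 10, 5, 1} : Set ℕ)) (n : ℕ) :
    greedyCount (n + c) ≤ greedyCount n + 1 := by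
  have small : ∀ r < 25, ∀ c ∈ ({25, 10, 5, 1} : Finset ℕ),
      greedyCount (r + c) ≤ greedyCount r + 1 := by decide
  have hr := small (n % 25) (Nat.mod_lt n (by norm_num)) c (by simpa using hc)
  have hn : n = n % 25 + 25 * (n / 25) := (Nat.mod_add_div n 25).symm
  rw [hn, add_right_comm, greedyCount_add_mul_25, greedyCount_add_mul_25]
  omega

lemma greedyCount_sum_le_card (m : Multiset ℕ) (hm : ∀ x ∈ m, x ∈ ({25, 10, 5, 1} : Set ℕ)) :
    greedyCount m.sum ≤ Multiset.card m := by
  induction m using Multiset.induction_on with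
  | empty => simp [greedyCount]
  | cons a m ih =>
    rw [Multiset.sum_cons, Multiset.card_cons, add_comm a]
    calc greedyCount (m.sum + a) ≤ greedyCount m.sum + 1 :=
          greedyCount_add_coin_le (hm a (Multiset.mem_cons_self a m)) _
      _ ≤ Multiset.card m + 1 :=
          Nat.add_le_add_right (ih fun x hx => hm x (Multiset.mem_cons_of_mem hx)) 1

lemma sum_range_greedyCount : ∑ n ∈ range 100, greedyCount n = 470 := by decide

lemma sum_mul_comp_eq_of_sum_fiber {ι α R : Type*} [Fintype ι] [DecidableEq α]
    [CommSemiring R] {v : ι → α} {p : ι → R} {t : Finset α} {w : α → R}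
    (hv : ∀ i, v i ∈ t) (hfiber : ∀ n ∈ t, ∑ i with v i = n, p i = w n) (f : α → R) :
    ∑ i, p i * f (v i) = ∑ n ∈ t, w n * f n := by
  rw [← sum_fiberwise_of_maps_to (fun i _ => hv i)]
  refine sum_congr rfl fun n hn => ?_
  rw [← hfiber n hn, sum_mul]
  refine sum_congr rfl fun i hi => ?_
  rw [(mem_filter.mp hi).2]

/-- If a finite-state chain on wallet states (multisets of coins from {25,10,5,1}
with value at most 99) has a distribution p inducing the uniform distribution on
wallet values in {0, ..., 99}, then the expected number of coins is at least 47/10. -/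
theorem expected_coins_lower_bound {ι : Type*} [Fintype ι]
    (s : ι → Multiset ℕ) (p : ι → ℚ)
    (hparts : ∀ i, ∀ x ∈ s i, x ∈ ({25, 10, 5, 1} : Set ℕ))
    (hval : ∀ i, (s i).sum ≤ 99)
    (hp : ∀ i, 0 ≤ p i)
    (hunif : ∀ n ∈ Finset.range 100,
      (∑ i ∈ Finset.univ.filter (fun i => (s i).sum = n), p i) = 1 / 100) :
    47 / 10 ≤ ∑ i : ι, p i * (s i).card := by
  have hrange : ∀ i, (s i).sum ∈ range 100 := fun i => mem_range.mpr (Nat.lt_succ_of_le (hval i))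
  calc (47 / 10 : ℚ) = ∑ n ∈ range 100, 1 / 100 * (greedyCount n : ℚ) := by
        rw [← mul_sum, ← Nat.cast_sum, sum_range_greedyCount]
        norm_num
    _ = ∑ i, p i * (greedyCount (s i).sum : ℚ) :=
        (sum_mul_comp_eq_of_sum_fiber hrange hunif _).symm
    _ ≤ ∑ i, p i * (s i).card := sum_le_sum fun i _ =>
        mul_le_mul_of_nonneg_left (mod_cast greedyCount_sum_le_card (s i) (hparts i)) (hp i)
end
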